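/- arXiv:1809.06141 — 3 statements merged into one kernel-verified Lean document; each statement's English description precedes it below -/
import Mathlib

section
/- Let v⁽¹⁾, …, v⁽ᵐ⁾ ∈ ℤ^d be nonzero reduced vectors spanning pairwise distinct lines, and let 𝒮 = {ℝ·v⁽¹⁾, …, ℝ·v⁽ᵐ⁾}. Two functions ψ, φ : ℕ₀^d → ℕ₀ with finite support have equal X-rays parallel to every line of 𝒮 if and only if there exists a polynomial p ∈ ℤ[X₁, …, X_d] such that Σ_a ψ(a)·X^a − Σ_b φ(b)·X^b = p · Π_{i=1}^{m} (X^{v⁽ⁱ⁾⁺} − X^{v⁽ⁱ⁾⁻}). -/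
open Set

variable {d : ℕ}

/-- The affine line through the coset `T` of the modulo-`S` quotient, i.e. an affine
line parallel to `S` when `S` is 1-dimensional. -/
def fiber (S : Submodule ℝ (Fin d → ℝ)) (T : (Fin d → ℝ) ⧸ S) : Set (Fin d → ℝ) :=
  {x | (Submodule.Quotient.mk x : (Fin d → ℝ) ⧸ S) = T}

/-- `F₁` and `F₂` have the same (discrete) X-ray parallel to `S`. -/
def XrayEq (S : Submodule ℝ (Fin d → ℝ)) (F₁ F₂ : Set (Fin d → ℝ)) : Prop :=
  ∀ T : (Fin d → ℝ) ⧸ S, (F₁ ∩ fiber S T).ncard = (F₂ ∩ fiber S T).ncard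

/-- `F₁` and `F₂` are tomographically equivalent w.r.t. the family `𝒮` of lines. -/
def TomEq (𝒮 : Set (Submodule ℝ (Fin d → ℝ))) (F₁ F₂ : Set (Fin d → ℝ)) : Prop :=
  ∀ S ∈ 𝒮, XrayEq S F₁ F₂

/-- A lattice line: a line through the origin spanned by a nonzero integer vector. -/
def IsLatticeLine (S : Submodule ℝ (Fin d → ℝ)) : Prop :=
  ∃ v : Fin d → ℤ, v ≠ 0 ∧ S = Submodule.span ℝ {fun i => (v i : ℝ)}

/-- The canonical embedding of `ℤ^d` into `ℝ^d`. -/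
def embed (x : Fin d → ℤ) : Fin d → ℝ := fun i => (x i : ℝ)

/-- The X-ray difference `Δ_𝒮(F₁,F₂)`. -/
noncomputable def xrayDiff (𝒮 : Set (Submodule ℝ (Fin d → ℝ))) (F₁ F₂ : Set (Fin d → ℝ)) : ℕ :=
  ∑ᶠ S ∈ 𝒮, ∑ᶠ T : (Fin d → ℝ) ⧸ S,
    (((F₁ ∩ fiber S T).ncard : ℤ) - ((F₂ ∩ fiber S T).ncard : ℤ)).natAbs

/-- A convex lattice set: `F = conv(F) ∩ ℤ^d`. -/
def IsConvexLatticeSet (F : Finset (Fin d → ℤ)) : Prop :=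
  embed '' ↑F = convexHull ℝ (embed '' ↑F) ∩ Set.range (embed : (Fin d → ℤ) → (Fin d → ℝ))


/-- The canonical embedding of `ℕ₀^d` into `ℝ^d`. -/
def embedN (x : Fin d → ℕ) : Fin d → ℝ := fun i => (x i : ℝ)

/-- The X-ray of a finitely supported function `ψ : ℕ₀^d → ℕ₀` parallel to `S`,
evaluated at the affine line corresponding to `T`. -/
noncomputable def xrayFun (S : Submodule ℝ (Fin d → ℝ)) (ψ : (Fin d → ℕ) → ℕ)
    (T : (Fin d → ℝ) ⧸ S) : ℕ :=
  ∑ᶠ x ∈ {x : Fin d → ℕ | (Submodule.Quotient.mk (embedN x) : (Fin d → ℝ) ⧸ S) = T}, ψ x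

/-- The generating polynomial `Σ_a ψ(a)·X^a ∈ ℤ[X₁,…,X_d]`. -/
noncomputable def polyOf (ψ : (Fin d → ℕ) → ℕ) : MvPolynomial (Fin d) ℤ :=
  ∑ᶠ a : Fin d → ℕ, MvPolynomial.monomial (Finsupp.equivFunOnFinite.symm a) ((ψ a : ℤ))

/-!
Write `f = Σ ψ(a) X^a - Σ φ(b) X^b`. For a reduced `v`, the lattice points on a real line
parallel to `v` form a coset of `ℤ v`, so equal X-rays along `v` say that the coefficients of `f`
sum to zero along every coset of `ℤ v` in `ℤ^d`. Modulo `X^{v⁺} - X^{v⁻}` all monomials on one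
coset are congruent, hence this happens exactly when `X^{v⁺} - X^{v⁻}` divides `f`.
Several directions are handled by dividing out one binomial at a time: if
`g · (X^{v⁺} - X^{v⁻})` has vanishing line sums along `w`, then the line sums of `g` along `w`
are periodic with period `v`; as `v` has infinite order modulo `ℤ w` and `g` has finitely many
monomials, they vanish.
-/

open MvPolynomial

open scoped Classical

section LineSums

variable {σ R : Type*} [CommRing R]

/-- Lattice lines parallel to `v` are modelled as cosets of `ℤ v` in `ℤ^σ`. -/
def lineOf (v : σ → ℤ) : (σ →₀ ℕ) →+ (σ → ℤ) ⧸ AddSubgroup.zmultiples v where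
  toFun e := QuotientAddGroup.mk fun i => (e i : ℤ)
  map_zero' := by simp only [Finsupp.coe_zero, Pi.zero_apply, Nat.cast_zero]; rfl
  map_add' e e' := by simp only [Finsupp.coe_add, Pi.add_apply, Nat.cast_add]; rfl

lemma lineOf_apply (v : σ → ℤ) (e : σ →₀ ℕ) :
    lineOf v e = QuotientAddGroup.mk fun i => (e i : ℤ) := rfl

lemma lineOf_eq_lineOf_iff {v : σ → ℤ} {e e' : σ →₀ ℕ} :
    lineOf v e = lineOf v e' ↔ ∃ k : ℤ, ∀ i, (e' i : ℤ) = e i + k * v i := by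
  simp only [lineOf_apply, QuotientAddGroup.eq, AddSubgroup.mem_zmultiples_iff, funext_iff]
  refine exists_congr fun k => forall_congr' fun i => ?_
  simp only [Pi.smul_apply, Pi.add_apply, Pi.neg_apply, smul_eq_mul]
  omega

noncomputable def lineSum (v : σ → ℤ) (q : (σ → ℤ) ⧸ AddSubgroup.zmultiples v)
    (f : MvPolynomial σ R) : R :=
  ∑ e ∈ f.support with lineOf v e = q, f.coeff e

variable {v : σ → ℤ} {q : (σ → ℤ) ⧸ AddSubgroup.zmultiples v}

lemma lineSum_eq_sum_of_support_subset {f : MvPolynomial σ R} {s : Finset (σ →₀ ℕ)}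
    (hs : f.support ⊆ s) : lineSum v q f = ∑ e ∈ s with lineOf v e = q, f.coeff e :=
  Finset.sum_subset (Finset.filter_subset_filter _ hs) fun _ _ _ => by
    simp_all [Finset.mem_filter]

lemma lineSum_add (f g : MvPolynomial σ R) :
    lineSum v q (f + g) = lineSum v q f + lineSum v q g := by
  rw [lineSum_eq_sum_of_support_subset support_add,
    lineSum_eq_sum_of_support_subset (Finset.subset_union_left (s₂ := g.support)),
    lineSum_eq_sum_of_support_subset (Finset.subset_union_right (s₁ := f.support)),
    ← Finset.sum_add_distrib]
  simp only [coeff_add]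

lemma lineSum_sub (f g : MvPolynomial σ R) :
    lineSum v q (f - g) = lineSum v q f - lineSum v q g := by
  rw [lineSum_eq_sum_of_support_subset (support_sub σ f g),
    lineSum_eq_sum_of_support_subset (Finset.subset_union_left (s₂ := g.support)),
    lineSum_eq_sum_of_support_subset (Finset.subset_union_right (s₁ := f.support)),
    ← Finset.sum_sub_distrib]
  simp only [coeff_sub]

lemma lineSum_monomial (e : σ →₀ ℕ) (a : R) :
    lineSum v q (monomial e a) = if lineOf v e = q then a else 0 := by
  rw [lineSum_eq_sum_of_support_subset support_monomial_subset, Finset.sum_filter,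
    Finset.sum_singleton, coeff_monomial, if_pos rfl]

lemma lineSum_mul_monomial (g : MvPolynomial σ R) (u : σ →₀ ℕ) :
    lineSum v q (g * monomial u 1) = lineSum v (q - lineOf v u) g := by
  induction g using MvPolynomial.induction_on' with
  | monomial b r =>
    rw [monomial_mul, mul_one, lineSum_monomial, lineSum_monomial, map_add]
    exact if_congr eq_sub_iff_add_eq.symm rfl rfl
  | add p p' hp hp' => rw [add_mul, lineSum_add, lineSum_add, hp, hp']

lemma lineSum_eq_zero_of_notMem_range {f : MvPolynomial σ R} (hq : q ∉ Set.range (lineOf v)) :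
    lineSum v q f = 0 :=
  Finset.sum_eq_zero fun e he => absurd ⟨e, (Finset.mem_filter.1 he).2⟩ hq

lemma mem_image_lineOf_of_lineSum_ne_zero {f : MvPolynomial σ R} (h : lineSum v q f ≠ 0) :
    q ∈ f.support.image (lineOf v) := by
  obtain ⟨e, he, -⟩ := Finset.exists_ne_zero_of_sum_ne_zero h
  exact Finset.mem_image.2 ⟨e, (Finset.mem_filter.1 he).1, (Finset.mem_filter.1 he).2⟩

end LineSums

section Binomials

variable {σ R : Type*} [CommRing R] [Finite σ]

noncomputable def posExp (v : σ → ℤ) : σ →₀ ℕ :=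
  Finsupp.equivFunOnFinite.symm fun i => (v i).toNat

noncomputable def negExp (v : σ → ℤ) : σ →₀ ℕ :=
  Finsupp.equivFunOnFinite.symm fun i => (-v i).toNat

noncomputable def latticeBinomial (v : σ → ℤ) : MvPolynomial σ R :=
  monomial (posExp v) 1 - monomial (negExp v) 1

lemma lineOf_posExp (w v : σ → ℤ) :
    lineOf w (posExp v) = lineOf w (negExp v) + QuotientAddGroup.mk v := by
  rw [lineOf_apply, lineOf_apply, ← QuotientAddGroup.mk_add]
  congr 1
  ext i
  simp only [posExp, negExp, Finsupp.coe_equivFunOnFinite_symm, Pi.add_apply]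
  omega

lemma latticeBinomial_dvd_monomial_sub_monomial_of_eq_add_nsmul {v : σ → ℤ} {e e' : σ →₀ ℕ} {n : ℕ}
    (h : ∀ i, (e' i : ℤ) = e i + n * v i) (a : R) :
    latticeBinomial v ∣ monomial e' a - monomial e a := by
  have hsplit : ∀ i, n * (-v i).toNat ≤ e i ∧ e' i = e i - n * (-v i).toNat + n * (v i).toNat := by
    intro i
    have hi := h i
    obtain ⟨m, hm | hm⟩ := (v i).eq_nat_or_neg <;>
      simp only [hm, Int.toNat_natCast, Int.toNat_neg_natCast, neg_neg, mul_zero, Nat.sub_zero,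
        zero_le, true_and, add_zero] at hi ⊢
    · exact_mod_cast hi
    · have : (0 : ℤ) ≤ e' i := by positivity
      refine ⟨by zify; linarith, ?_⟩
      zify [show n * m ≤ e i by zify; linarith]
      linarith
  set u := e - n • negExp v
  have he : e = u + n • negExp v := by
    ext i
    simp [u, negExp, Nat.sub_add_cancel (hsplit i).1]
  have he' : e' = u + n • posExp v := by
    ext i
    simp [u, negExp, posExp, (hsplit i).2]
  -- `X^{e'} - X^e = X^u ((X^{v⁺})^n - (X^{v⁻})^n)`
  have hpow : ∀ w : σ →₀ ℕ, monomial (u + n • w) a = monomial u a * monomial w 1 ^ n := by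
    intro w
    rw [monomial_pow, one_pow, monomial_mul, mul_one]
  rw [he, he', hpow, hpow, ← mul_sub]
  exact (sub_dvd_pow_sub_pow _ _ n).mul_left _

lemma latticeBinomial_dvd_monomial_sub_monomial {v : σ → ℤ} {e e' : σ →₀ ℕ}
    (h : lineOf v e = lineOf v e') (a : R) :
    latticeBinomial v ∣ monomial e a - monomial e' a := by
  obtain ⟨k, hk⟩ := lineOf_eq_lineOf_iff.1 h
  obtain ⟨n, rfl | rfl⟩ := k.eq_nat_or_neg
  · rw [← neg_sub]
    exact (latticeBinomial_dvd_monomial_sub_monomial_of_eq_add_nsmul hk a).neg_right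
  · exact latticeBinomial_dvd_monomial_sub_monomial_of_eq_add_nsmul (fun i => by rw [hk i]; ring) a

theorem latticeBinomial_dvd_of_lineSum_eq_zero {v : σ → ℤ} {f : MvPolynomial σ R}
    (h : ∀ q, lineSum v q f = 0) : latticeBinomial v ∣ f := by
  -- Move every monomial of `f` to a chosen representative `r q` of its line `q`: each move is
  -- divisible by the binomial, and the moved polynomial is `Σ_q (lineSum v q f) X^{r q} = 0`.
  set r := Function.invFun (lineOf v)
  have hr : ∀ e, lineOf v (r (lineOf v e)) = lineOf v e := fun e => Function.invFun_eq ⟨e, rfl⟩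
  have hrepr : ∑ e ∈ f.support, monomial (r (lineOf v e)) (f.coeff e) = 0 := by
    rw [← Finset.sum_fiberwise_of_maps_to fun e he => Finset.mem_image_of_mem (lineOf v) he]
    refine Finset.sum_eq_zero fun q _ => ?_
    rw [Finset.sum_congr rfl fun e he => by rw [(Finset.mem_filter.1 he).2], ← map_sum]
    exact (congrArg _ (h q)).trans (map_zero _)
  rw [← f.support_sum_monomial_coeff, ← sub_zero (Finset.sum _ _), ← hrepr,
    ← Finset.sum_sub_distrib]
  exact Finset.dvd_sum fun e _ => latticeBinomial_dvd_monomial_sub_monomial (hr e).symm _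

lemma lineSum_mul_latticeBinomial (v : σ → ℤ) (g : MvPolynomial σ R)
    (q : (σ → ℤ) ⧸ AddSubgroup.zmultiples v) : lineSum v q (g * latticeBinomial v) = 0 := by
  rw [latticeBinomial, mul_sub, lineSum_sub, lineSum_mul_monomial, lineSum_mul_monomial,
    lineOf_posExp, (QuotientAddGroup.eq_zero_iff v).2 (AddSubgroup.mem_zmultiples v), add_zero,
    sub_self]

theorem latticeBinomial_dvd_iff {v : σ → ℤ} {f : MvPolynomial σ R} :
    latticeBinomial v ∣ f ↔ ∀ q, lineSum v q f = 0 := by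
  refine ⟨?_, latticeBinomial_dvd_of_lineSum_eq_zero⟩
  rintro ⟨g, rfl⟩ q
  rw [mul_comm]
  exact lineSum_mul_latticeBinomial v g q

lemma lineSum_eq_zero_of_mul_latticeBinomial {v w : σ → ℤ} {g : MvPolynomial σ R}
    (hvw : ¬IsOfFinAddOrder (QuotientAddGroup.mk v : (σ → ℤ) ⧸ AddSubgroup.zmultiples w))
    (h : ∀ q, lineSum w q (g * latticeBinomial v) = 0) (q) : lineSum w q g = 0 := by
  have hper : Function.Periodic (fun q => lineSum w q g) (QuotientAddGroup.mk v) := by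
    intro q
    have := h (q + lineOf w (posExp v))
    rw [latticeBinomial, mul_sub, lineSum_sub, lineSum_mul_monomial, lineSum_mul_monomial,
      sub_eq_zero, add_sub_cancel_right, lineOf_posExp] at this
    simp only [this]
    congr 1
    abel
  by_contra hq
  have hinj : Function.Injective fun n : ℤ => q + n • (QuotientAddGroup.mk v : (σ → ℤ) ⧸ _) :=
    (add_right_injective q).comp (injective_zsmul_iff_not_isOfFinAddOrder.2 hvw)
  refine Set.infinite_of_injective_forall_mem hinj (fun n => ?_)
    (g.support.image (lineOf w)).finite_toSet
  exact mem_image_lineOf_of_lineSum_ne_zero ((hper.zsmul n q).trans_ne hq)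

theorem prod_latticeBinomial_dvd_iff {ι : Type*} {v : ι → σ → ℤ}
    (hv : Pairwise fun i j =>
      ¬IsOfFinAddOrder (QuotientAddGroup.mk (v i) : (σ → ℤ) ⧸ AddSubgroup.zmultiples (v j)))
    (s : Finset ι) (f : MvPolynomial σ R) :
    (∏ i ∈ s, latticeBinomial (v i)) ∣ f ↔ ∀ i ∈ s, ∀ q, lineSum (v i) q f = 0 := by
  refine ⟨fun h i hi => latticeBinomial_dvd_iff.1
    ((Finset.dvd_prod_of_mem (fun i => latticeBinomial (v i)) hi).trans h), ?_⟩
  induction s using Finset.cons_induction generalizing f with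
  | empty => simp
  | cons a s ha ih =>
    intro h
    obtain ⟨g, rfl⟩ := latticeBinomial_dvd_iff.2 (h a (Finset.mem_cons_self a s))
    rw [Finset.prod_cons]
    refine mul_dvd_mul_left _ (ih g fun i hi => ?_)
    refine lineSum_eq_zero_of_mul_latticeBinomial (hv (ne_of_mem_of_not_mem hi ha).symm) ?_
    simpa only [mul_comm g] using h i (Finset.mem_cons_of_mem hi)

end Binomials

section XRays

lemma intCast_mem_span_singleton_iff {ι : Type*} [Fintype ι] {v : ι → ℤ}
    (hv : Finset.univ.gcd v = 1) (z : ι → ℤ) :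
    (fun i => (z i : ℝ)) ∈ ℝ ∙ (fun i => (v i : ℝ)) ↔ z ∈ AddSubgroup.zmultiples v := by
  rw [Submodule.mem_span_singleton, AddSubgroup.mem_zmultiples_iff]
  constructor
  · rintro ⟨t, ht⟩
    have hz : ∀ i, (z i : ℝ) = t * v i := fun i => (congrFun ht i).symm
    obtain ⟨a, ha⟩ := Finset.univ.gcd_eq_sum_mul v
    rw [hv] at ha
    refine ⟨∑ i, z i * a i, funext fun j => ?_⟩
    have : (∑ i, (z i : ℝ) * a i) * v j = z j := by
      calc (∑ i, (z i : ℝ) * a i) * v j = t * v j * ((∑ i, v i * a i : ℤ) : ℝ) := by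
            simp only [hz, Int.cast_sum, Int.cast_mul, Finset.mul_sum, Finset.sum_mul]
            exact Finset.sum_congr rfl fun i _ => by ring
        _ = z j := by rw [← ha, hz]; simp
    exact_mod_cast this
  · rintro ⟨k, rfl⟩
    exact ⟨k, by ext; simp⟩

lemma ne_zero_of_gcd_eq_one {ι : Type*} [Fintype ι] {v : ι → ℤ} (hv : Finset.univ.gcd v = 1) :
    v ≠ 0 := by
  rintro rfl
  exact zero_ne_one ((Finset.gcd_eq_zero_iff.2 fun i _ => rfl).symm.trans hv)

lemma not_isOfFinAddOrder_mk_of_span_ne {ι : Type*} {v w : ι → ℤ} (hv : v ≠ 0)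
    (h : (ℝ ∙ fun i => (v i : ℝ)) ≠ ℝ ∙ fun i => (w i : ℝ)) :
    ¬IsOfFinAddOrder (QuotientAddGroup.mk v : (ι → ℤ) ⧸ AddSubgroup.zmultiples w) := by
  rw [isOfFinAddOrder_iff_nsmul_eq_zero]
  rintro ⟨n, hn, hnv⟩
  rw [← QuotientAddGroup.mk_nsmul, QuotientAddGroup.eq_zero_iff,
    AddSubgroup.mem_zmultiples_iff] at hnv
  obtain ⟨k, hk⟩ := hnv
  have hk0 : k ≠ 0 := by
    rintro rfl
    exact hv ((smul_eq_zero.1 (hk.symm.trans (zero_smul ℤ w))).resolve_left hn.ne')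
  have hkR : (k : ℝ) • (fun i => (w i : ℝ)) = (n : ℝ) • fun i => (v i : ℝ) := by
    ext i
    simpa using congrArg (fun u : ι → ℤ => (u i : ℝ)) hk
  apply h
  rw [← Submodule.span_singleton_smul_eq (isUnit_iff_ne_zero.2 (by positivity : (n : ℝ) ≠ 0)),
    ← hkR, Submodule.span_singleton_smul_eq (isUnit_iff_ne_zero.2 (by exact_mod_cast hk0))]

lemma mk_embedN_eq_mk_embedN_iff {v : Fin d → ℤ} (hv : Finset.univ.gcd v = 1)
    (x y : Fin d → ℕ) :
    (Submodule.Quotient.mk (embedN x) : (Fin d → ℝ) ⧸ ℝ ∙ fun t => (v t : ℝ)) =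
        Submodule.Quotient.mk (embedN y) ↔
      lineOf v (Finsupp.equivFunOnFinite.symm x) = lineOf v (Finsupp.equivFunOnFinite.symm y) := by
  rw [Submodule.Quotient.eq, lineOf_apply, lineOf_apply, QuotientAddGroup.eq_iff_sub_mem,
    ← intCast_mem_span_singleton_iff hv]
  convert Iff.rfl using 2
  ext i
  simp [embedN]

lemma coeff_polyOf {ψ : (Fin d → ℕ) → ℕ} (hψ : ψ.support.Finite) (e : Fin d →₀ ℕ) :
    (polyOf ψ).coeff e = ψ (Finsupp.equivFunOnFinite e) := by
  have hsupp : (Function.support fun a =>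
      monomial (Finsupp.equivFunOnFinite.symm a) (ψ a : ℤ)).Finite :=
    hψ.subset fun a ha h0 => ha (by simp [h0])
  rw [polyOf, ← coeffAddMonoidHom_apply, AddMonoidHom.map_finsum _ hsupp,
    finsum_eq_single _ (Finsupp.equivFunOnFinite e)]
  · simp
  · intro a ha
    rw [coeffAddMonoidHom_apply, coeff_monomial, if_neg]
    rintro rfl
    exact ha (Equiv.apply_symm_apply _ a).symm

lemma xrayFun_mk_embedN {v : Fin d → ℤ} (hv : Finset.univ.gcd v = 1) {ψ : (Fin d → ℕ) → ℕ}
    (hψ : ψ.support.Finite) (x : Fin d → ℕ) :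
    (xrayFun (ℝ ∙ fun t => (v t : ℝ)) ψ (Submodule.Quotient.mk (embedN x)) : ℤ) =
      lineSum v (lineOf v (Finsupp.equivFunOnFinite.symm x)) (polyOf ψ) := by
  have hsupp :
      (polyOf ψ).support ⊆ hψ.toFinset.map Finsupp.equivFunOnFinite.symm.toEmbedding := by
    intro e he
    rw [mem_support_iff, coeff_polyOf hψ] at he
    exact Finset.mem_map_equiv.2 (hψ.mem_toFinset.2 (by exact_mod_cast he))
  rw [xrayFun, finsum_mem_eq_sum_filter _ _ hψ, Nat.cast_sum,
    lineSum_eq_sum_of_support_subset hsupp, Finset.filter_map, Finset.sum_map]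
  refine Finset.sum_congr ?_ fun y _ => ?_
  · ext y
    simp [mk_embedN_eq_mk_embedN_iff hv]
  · simp [coeff_polyOf hψ]

theorem xrayFun_eq_iff_lineSum_eq_zero {v : Fin d → ℤ} (hv : Finset.univ.gcd v = 1)
    {ψ φ : (Fin d → ℕ) → ℕ} (hψ : ψ.support.Finite) (hφ : φ.support.Finite) :
    (∀ T, xrayFun (ℝ ∙ fun t => (v t : ℝ)) ψ T = xrayFun (ℝ ∙ fun t => (v t : ℝ)) φ T) ↔
      ∀ q, lineSum v q (polyOf ψ - polyOf φ) = 0 := by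
  constructor
  · intro h q
    by_cases hq : q ∈ Set.range (lineOf v)
    · obtain ⟨x, rfl⟩ : ∃ x, lineOf v (Finsupp.equivFunOnFinite.symm x) = q := by
        obtain ⟨e, rfl⟩ := hq
        exact ⟨Finsupp.equivFunOnFinite e, by simp⟩
      rw [lineSum_sub, ← xrayFun_mk_embedN hv hψ, ← xrayFun_mk_embedN hv hφ, h, sub_self]
    · exact lineSum_eq_zero_of_notMem_range hq
  · intro h T
    by_cases hT : ∃ x, Submodule.Quotient.mk (embedN x) = T
    · obtain ⟨x, rfl⟩ := hT
      have := h (lineOf v (Finsupp.equivFunOnFinite.symm x))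
      rw [lineSum_sub, sub_eq_zero, ← xrayFun_mk_embedN hv hψ, ← xrayFun_mk_embedN hv hφ] at this
      exact_mod_cast this
    · rw [not_exists] at hT
      simp [xrayFun, hT]

end XRays

theorem hajdu_tijdeman_several_directions_general
    (d m : ℕ) (v : Fin m → Fin d → ℤ)
    (hred : ∀ i, Finset.univ.gcd (v i) = 1)
    (hdist : ∀ i j : Fin m, i ≠ j →
      Submodule.span ℝ {fun t => ((v i t : ℝ))} ≠ Submodule.span ℝ {fun t => ((v j t : ℝ))})
    (ψ φ : (Fin d → ℕ) → ℕ)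
    (hψ : (Function.support ψ).Finite) (hφ : (Function.support φ).Finite) :
    (∀ i : Fin m, ∀ T : (Fin d → ℝ) ⧸ (Submodule.span ℝ {fun t => ((v i t : ℝ))}),
        xrayFun (Submodule.span ℝ {fun t => ((v i t : ℝ))}) ψ T =
        xrayFun (Submodule.span ℝ {fun t => ((v i t : ℝ))}) φ T) ↔
      ∃ p : MvPolynomial (Fin d) ℤ,
        polyOf ψ - polyOf φ =
          p * ∏ i : Fin m,
            (MvPolynomial.monomial (Finsupp.equivFunOnFinite.symm fun t => (v i t).toNat) (1 : ℤ) -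
              MvPolynomial.monomial
                (Finsupp.equivFunOnFinite.symm fun t => (-(v i t)).toNat) (1 : ℤ)) := by
  have hind : Pairwise fun i j =>
      ¬IsOfFinAddOrder (QuotientAddGroup.mk (v i) : (Fin d → ℤ) ⧸ AddSubgroup.zmultiples (v j)) :=
    fun i j hij =>
      not_isOfFinAddOrder_mk_of_span_ne (ne_zero_of_gcd_eq_one (hred i)) (hdist i j hij)
  rw [← dvd_iff_exists_eq_mul_left]
  refine (forall_congr' fun i => xrayFun_eq_iff_lineSum_eq_zero (hred i) hψ hφ).trans ?_
  exact ((prod_latticeBinomial_dvd_iff hind Finset.univ _).trans (by simp)).symm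

theorem hajdu_tijdeman_several_directions
    (d m : ℕ) (v : Fin m → Fin d → ℤ)
    (hv0 : ∀ i, v i ≠ 0)
    (hred : ∀ i, Finset.univ.gcd (v i) = 1)
    (hdist : ∀ i j : Fin m, i ≠ j →
      Submodule.span ℝ {fun t => ((v i t : ℝ))} ≠ Submodule.span ℝ {fun t => ((v j t : ℝ))})
    (ψ φ : (Fin d → ℕ) → ℕ)
    (hψ : (Function.support ψ).Finite) (hφ : (Function.support φ).Finite) :
    (∀ i : Fin m, ∀ T : (Fin d → ℝ) ⧸ (Submodule.span ℝ {fun t => ((v i t : ℝ))}),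
        xrayFun (Submodule.span ℝ {fun t => ((v i t : ℝ))}) ψ T =
        xrayFun (Submodule.span ℝ {fun t => ((v i t : ℝ))}) φ T) ↔
      ∃ p : MvPolynomial (Fin d) ℤ,
        polyOf ψ - polyOf φ =
          p * ∏ i : Fin m,
            (MvPolynomial.monomial (Finsupp.equivFunOnFinite.symm fun t => (v i t).toNat) (1 : ℤ) -
              MvPolynomial.monomial
                (Finsupp.equivFunOnFinite.symm fun t => (-(v i t)).toNat) (1 : ℤ)) :=
  hajdu_tijdeman_several_directions_general d m v hred hdist ψ φ hψ hφ
end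

section
/- (van Dalen) Let 𝒮 = {S₁, S₂} be a set of two distinct lattice lines in ℝ², and let F₁, F₂ ⊆ ℤ² be finite sets with |F₁| = |F₂|. Suppose F₁ is uniquely determined among finite subsets of ℤ² by its two X-rays parallel to S₁ and S₂, and set β = Δ_𝒮(F₁, F₂). Then 4|F₁ ∩ F₂| + (β + 2)·(β − 1 + √(8|F₁ ∩ F₂| + (β − 1)²)) ≥ 4|F₁|. -/
/-
Call lines parallel to `S₁` rows and lines parallel to `S₂` columns, and let `A = F₁ \ F₂`,
`B = F₂ \ F₁`, so that `|A| = |B| = k`. Since `F₁` is uniquely determined, it has no switching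
component: if `z ∉ F₁` shares a row with `x ∈ F₁` and a column with `y ∈ F₁`, then the fourth
corner `x + y - z` lies in `F₁`. Hence, going from `a ∈ A` to a point `b ∈ B` in its column and
then to a point of `A` in the row of `b` strictly decreases the number of points of `F₁` in the
row. Matching `A` to `B` along columns and `B` to `A` along rows leaves at most `q ≤ β / 2`
points of `A` without such a successor, so at most `q` points of `A` lie in rows of any given
size. Double counting then gives `k² ≤ 2 q² |F₁| ≤ β² |F₁| / 2`, and solving this quadratic
inequality for `k`, with `|F₁| = k + |F₁ ∩ F₂|`, gives the bound.
-/

open Set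

variable {d : ℕ}

open Finset

section Counting

variable {X : Type*}

lemma card_filter_eq_le_card_sdiff [DecidableEq X] (A : Finset X) {D : Finset X} {g : X → X}
    {f : X → ℕ} (hg : Set.InjOn g D) (hgD : ∀ a ∈ D, g a ∈ A ∧ f (g a) < f a) (t : ℕ) :
    #{a ∈ A | f a = t} ≤ #(A \ D) := by
  have hmaps : Set.MapsTo g ({a ∈ D | f a ≤ t} : Finset X) ({a ∈ A | f a < t} : Finset X) :=
    fun a ha => by
      simp only [mem_coe, mem_filter] at ha ⊢
      exact ⟨(hgD a ha.1).1, (hgD a ha.1).2.trans_le ha.2⟩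
  have hle : #{a ∈ A | f a ≤ t} ≤ #{a ∈ A | f a < t} + #(A \ D) :=
    calc #{a ∈ A | f a ≤ t} ≤ #({a ∈ D | f a ≤ t} ∪ A \ D) :=
          card_le_card fun a => by simp only [mem_filter, Finset.mem_union, Finset.mem_sdiff]; tauto
      _ ≤ _ := (Finset.card_union_le _ _).trans (add_le_add_left
          (card_le_card_of_injOn g hmaps (hg.mono (coe_subset.2 (filter_subset _ _)))) _)
  have hsplit : #{a ∈ A | f a = t} + #{a ∈ A | f a < t} = #{a ∈ A | f a ≤ t} := by
    rw [← card_union_of_disjoint (disjoint_filter.2 fun _ _ h => h.not_lt), ← filter_or]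
    simp only [le_iff_eq_or_lt]
  omega

lemma card_filter_le_le_mul (A : Finset X) {f : X → ℕ} {q : ℕ}
    (hlevel : ∀ t, #{a ∈ A | f a = t} ≤ q) (hpos : ∀ a ∈ A, 0 < f a) (t : ℕ) :
    #{a ∈ A | f a ≤ t} ≤ q * t := by
  classical
  induction t with
  | zero => simp [filter_eq_empty_iff.2 fun a ha => (hpos a ha).ne']
  | succ t ih =>
    calc #{a ∈ A | f a ≤ t + 1} ≤ #({a ∈ A | f a ≤ t} ∪ {a ∈ A | f a = t + 1}) :=
          card_le_card fun a => by simp only [mem_filter]; grind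
      _ ≤ q * t + q := (Finset.card_union_le _ _).trans (add_le_add ih (hlevel _))
      _ = q * (t + 1) := by ring

lemma sq_card_le_two_mul_sum_card_filter_le {α : Type*} [LinearOrder α] (A : Finset X)
    (f : X → α) : #A ^ 2 ≤ 2 * ∑ a ∈ A, #{b ∈ A | f b ≤ f a} := by
  have hpair : ∀ a b, 1 ≤ (if f b ≤ f a then 1 else 0) + (if f a ≤ f b then 1 else 0) := by
    intro a b
    rcases le_total (f b) (f a) with h | h <;> simp [h]
  calc #A ^ 2 = ∑ a ∈ A, ∑ b ∈ A, 1 := by simp [sq]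
    _ ≤ ∑ a ∈ A, ∑ b ∈ A, ((if f b ≤ f a then 1 else 0) + (if f a ≤ f b then 1 else 0)) :=
        sum_le_sum fun a _ => sum_le_sum fun b _ => hpair a b
    _ = 2 * ∑ a ∈ A, #{b ∈ A | f b ≤ f a} := by
        simp only [sum_add_distrib, card_filter]
        rw [sum_comm (f := fun a b => if f a ≤ f b then 1 else 0)]
        ring

lemma sum_card_filter_eq_le_mul {I : Type*} [DecidableEq I] (A G : Finset X) (ρ : X → I)
    {q : ℕ} (hfiber : ∀ i, #{a ∈ A | ρ a = i} ≤ q) :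
    ∑ a ∈ A, #{x ∈ G | ρ x = ρ a} ≤ q * #G :=
  calc ∑ a ∈ A, #{x ∈ G | ρ x = ρ a} = ∑ x ∈ G, #{a ∈ A | ρ a = ρ x} := by
        simp only [card_filter]
        rw [sum_comm]
        simp only [eq_comm]
    _ ≤ ∑ x ∈ G, q := sum_le_sum fun x _ => hfiber _
    _ = q * #G := by rw [sum_const, smul_eq_mul, mul_comm]

end Counting

section Matching

variable {X K : Type*} [DecidableEq X] [DecidableEq K]

lemma exists_injOn_card_sdiff_eq (P Q : Finset X) :
    ∃ D ⊆ P, ∃ g : X → X, Set.InjOn g D ∧ Set.MapsTo g D Q ∧ #(P \ D) = #P - #Q := by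
  obtain ⟨D, hDP, hD⟩ := exists_subset_card_eq (min_le_left #P #Q)
  obtain ⟨E, hEQ, hE⟩ := exists_subset_card_eq (min_le_right #P #Q)
  let e := equivOfCardEq (hD.trans hE.symm)
  refine ⟨D, hDP, fun x => if h : x ∈ D then e ⟨x, h⟩ else x, ?_, ?_, ?_⟩
  · intro a ha b hb hab
    simp only [mem_coe] at ha hb
    simp only [dif_pos ha, dif_pos hb] at hab
    exact congrArg Subtype.val (e.injective (Subtype.ext hab))
  · intro a ha
    simp only [mem_coe] at ha
    simpa [dif_pos ha] using hEQ (e ⟨a, ha⟩).2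
  · rw [card_sdiff_of_subset hDP, hD, tsub_min]

lemma exists_fiberwise_injOn (P Q : Finset X) (c : X → K) {s : Finset K}
    (hs : Set.MapsTo c P s) :
    ∃ D ⊆ P, ∃ g : X → X, Set.InjOn g D ∧ (∀ a ∈ D, g a ∈ Q ∧ c (g a) = c a) ∧
      #(P \ D) = ∑ κ ∈ s, (#{x ∈ P | c x = κ} - #{x ∈ Q | c x = κ}) := by
  choose E _ g hg hgQ hcard using
    fun κ => exists_injOn_card_sdiff_eq {x ∈ P | c x = κ} {x ∈ Q | c x = κ}
  have hgc : ∀ a, a ∈ E (c a) → g (c a) a ∈ Q ∧ c (g (c a) a) = c a := fun a ha =>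
    mem_filter.1 (hgQ (c a) ha)
  refine ⟨{x ∈ P | x ∈ E (c x)}, filter_subset _ _, fun x => g (c x) x, ?_, ?_, ?_⟩
  · intro a ha b hb hab
    simp only [mem_coe, mem_filter] at ha hb hab
    have hc : c a = c b := by rw [← (hgc a ha.2).2, ← (hgc b hb.2).2, hab]
    rw [hc] at ha hab
    exact hg (c b) ha.2 hb.2 hab
  · exact fun a ha => hgc a (mem_filter.1 ha).2
  · rw [card_eq_sum_card_fiberwise (hs.mono sdiff_subset subset_rfl)]
    refine sum_congr rfl fun κ _ => ?_
    rw [← hcard κ]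
    congr 1
    ext x
    simp only [mem_filter, Finset.mem_sdiff]
    constructor
    · rintro ⟨⟨hxP, hxE⟩, rfl⟩
      exact ⟨⟨hxP, rfl⟩, fun h => hxE ⟨hxP, h⟩⟩
    · rintro ⟨⟨hxP, rfl⟩, hxE⟩
      exact ⟨⟨hxP, fun h => hxE h.2⟩, rfl⟩

lemma card_sdiff_filter_mem_le (A : Finset X) {B D₁ D₂ : Finset X} {g : X → X}
    (hg : Set.InjOn g D₁) (hgB : Set.MapsTo g D₁ B) :
    #(A \ {a ∈ D₁ | g a ∈ D₂}) ≤ #(A \ D₁) + #(B \ D₂) := by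
  have hmaps : Set.MapsTo g ({a ∈ D₁ | g a ∉ D₂} : Finset X) (B \ D₂ : Finset X) := fun a ha => by
    simp only [mem_coe, mem_filter, Finset.mem_sdiff] at ha ⊢
    exact ⟨hgB ha.1, ha.2⟩
  calc #(A \ {a ∈ D₁ | g a ∈ D₂}) ≤ #(A \ D₁ ∪ {a ∈ D₁ | g a ∉ D₂}) :=
        card_le_card fun a => by simp only [Finset.mem_sdiff, mem_filter, Finset.mem_union]; tauto
    _ ≤ _ := (Finset.card_union_le _ _).trans (add_le_add_right
        (card_le_card_of_injOn g hmaps (hg.mono (coe_subset.2 (filter_subset _ _)))) _)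

def fiberDiscrepancy (c : X → K) (G H : Finset X) : ℕ :=
  ∑ κ ∈ (G ∪ H).image c, ((#{x ∈ G | c x = κ} : ℤ) - #{x ∈ H | c x = κ}).natAbs

lemma fiberDiscrepancy_comm (c : X → K) (G H : Finset X) :
    fiberDiscrepancy c G H = fiberDiscrepancy c H G := by
  simp only [fiberDiscrepancy, Finset.union_comm G H]
  exact sum_congr rfl fun κ _ => by omega

lemma card_filter_eq_card_filter_sdiff_add (G H : Finset X) (p : X → Prop) [DecidablePred p] :
    #{x ∈ G | p x} = #{x ∈ G \ H | p x} + #{x ∈ G ∩ H | p x} := by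
  rw [← card_union_of_disjoint (disjoint_filter_filter (disjoint_sdiff_inter G H)),
    ← filter_union, Finset.sdiff_union_inter]

lemma fiberDiscrepancy_eq_two_mul_sum (c : X → K) {G H : Finset X} (hcard : #G = #H) :
    fiberDiscrepancy c G H =
      2 * ∑ κ ∈ (G ∪ H).image c, (#{x ∈ G \ H | c x = κ} - #{x ∈ H \ G | c x = κ}) := by
  rw [fiberDiscrepancy]
  set s := (G ∪ H).image c
  have hsum : ∀ P ⊆ G ∪ H, #P = ∑ κ ∈ s, #{x ∈ P | c x = κ} := fun P hP =>
    card_eq_sum_card_fiberwise fun x hx => mem_image_of_mem c (hP hx)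
  have hcard' : #(G \ H) = #(H \ G) := by
    have := card_sdiff_add_card_inter G H
    have := card_sdiff_add_card_inter H G
    rw [Finset.inter_comm] at this
    omega
  have hmax : ∑ κ ∈ s, (#{x ∈ G \ H | c x = κ} - #{x ∈ H \ G | c x = κ}) + #(H \ G) =
      ∑ κ ∈ s, (#{x ∈ H \ G | c x = κ} - #{x ∈ G \ H | c x = κ}) + #(G \ H) := by
    rw [hsum (H \ G) (sdiff_subset.trans subset_union_right),
      hsum (G \ H) (sdiff_subset.trans subset_union_left), ← sum_add_distrib, ← sum_add_distrib]
    exact sum_congr rfl fun κ _ => by omega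
  have hterm : ∀ κ, ((#{x ∈ G | c x = κ} : ℤ) - #{x ∈ H | c x = κ}).natAbs =
      (#{x ∈ G \ H | c x = κ} - #{x ∈ H \ G | c x = κ}) +
        (#{x ∈ H \ G | c x = κ} - #{x ∈ G \ H | c x = κ}) := fun κ => by
    rw [card_filter_eq_card_filter_sdiff_add G H, card_filter_eq_card_filter_sdiff_add H G,
      Finset.inter_comm H G]
    omega
  rw [sum_congr rfl fun κ _ => hterm κ, sum_add_distrib]
  omega

end Matching

section Corners

variable {X I J : Type*} [DecidableEq I] [DecidableEq J]

def IsDeterminedByFibers (ρ : X → I) (γ : X → J) (G : Finset X) : Prop :=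
  ∀ G' : Finset X, (∀ i, #{x ∈ G' | ρ x = i} = #{x ∈ G | ρ x = i}) →
    (∀ j, #{x ∈ G' | γ x = j} = #{x ∈ G | γ x = j}) → G' = G

def CornerClosed (ρ : X → I) (γ : X → J) (G : Finset X) : Prop :=
  ∀ x ∈ G, ∀ y ∈ G, ∀ z ∉ G, ρ z = ρ x → γ z = γ y → ∃ w ∈ G, ρ w = ρ y ∧ γ w = γ x

lemma card_filter_insert_insert_erase_erase [DecidableEq X] {G : Finset X} {x y z w : X}
    (θ : X → I) (hx : x ∈ G) (hy : y ∈ G) (hxy : x ≠ y) (hz : z ∉ G) (hw : w ∉ G)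
    (hzw : z ≠ w) (hzx : θ z = θ x) (hwy : θ w = θ y) (i : I) :
    #{a ∈ insert z (insert w ((G.erase x).erase y)) | θ a = i} = #{a ∈ G | θ a = i} := by
  have hw' : w ∉ (G.erase x).erase y := fun h => hw (mem_of_mem_erase (mem_of_mem_erase h))
  have hz' : z ∉ insert w ((G.erase x).erase y) := by
    rw [Finset.mem_insert]
    exact fun h => h.elim hzw fun h => hz (mem_of_mem_erase (mem_of_mem_erase h))
  simp only [card_filter]
  rw [sum_insert hz', sum_insert hw', ← add_sum_erase G _ hx,
    ← add_sum_erase (G.erase x) _ (mem_erase.2 ⟨hxy.symm, hy⟩), hzx, hwy]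

lemma IsDeterminedByFibers.cornerClosed [DecidableEq X] [AddCommGroup X] [AddCommGroup I]
    [AddCommGroup J] {ρ : X →+ I} {γ : X →+ J} (hinj : Function.Injective fun x => (ρ x, γ x))
    {G : Finset X} (hG : IsDeterminedByFibers ρ γ G) : CornerClosed ρ γ G := by
  intro x hx y hy z hz hzx hzy
  by_contra! hno
  -- otherwise trading `x, y` for `z, w` would keep both families of fibre sizes
  set w := x + y - z
  have hwy : ρ w = ρ y := by simp only [w, map_sub, map_add, hzx]; abel
  have hwx : γ w = γ x := by simp only [w, map_sub, map_add, hzy]; abel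
  have hw : w ∉ G := fun h => hno w h hwy hwx
  have hxy : x ≠ y := by
    rintro rfl
    exact hz (hinj (Prod.ext hzx hzy) ▸ hx)
  have hzw : z ≠ w := fun h => hxy (hinj (Prod.ext (show ρ x = ρ y by rw [← hzx, h, hwy])
    (show γ x = γ y by rw [← hwx, ← h, hzy])))
  have hG' := hG (insert z (insert w ((G.erase x).erase y)))
    (card_filter_insert_insert_erase_erase ρ hx hy hxy hz hw hzw hzx hwy)
    (by rw [erase_right_comm]
        exact card_filter_insert_insert_erase_erase γ hy hx hxy.symm hz hw hzw hzy hwx)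
  exact hz (hG' ▸ mem_insert_self z _)

lemma card_filter_lt_of_cornerClosed {ρ : X → I} {γ : X → J}
    (hinj : Function.Injective fun x => (ρ x, γ x)) {G : Finset X} (hG : CornerClosed ρ γ G)
    {a b : X} (ha : a ∈ G) (hb : b ∉ G) (hab : γ b = γ a) :
    #{x ∈ G | ρ x = ρ b} < #{x ∈ G | ρ x = ρ a} := by
  have hcols : ∀ i, #{x ∈ G | ρ x = i} = #(({x ∈ G | ρ x = i} : Finset X).image γ) := fun i =>
    (card_image_of_injOn fun x hx y hy hxy => hinj (Prod.ext
      (((mem_filter.1 hx).2).trans (mem_filter.1 hy).2.symm) hxy)).symm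
  rw [hcols, hcols]
  refine card_lt_card ((Finset.ssubset_iff_of_subset ?_).2
    ⟨γ a, mem_image_of_mem γ (mem_filter.2 ⟨ha, rfl⟩), ?_⟩)
  · intro j hj
    obtain ⟨x, hx, rfl⟩ := mem_image.1 hj
    obtain ⟨hxG, hxb⟩ := mem_filter.1 hx
    obtain ⟨w, hwG, hwρ, hwγ⟩ := hG x hxG a ha b hb hxb.symm hab
    exact mem_image.2 ⟨w, mem_filter.2 ⟨hwG, hwρ⟩, hwγ⟩
  · intro h
    obtain ⟨x, hx, hxγ⟩ := mem_image.1 h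
    obtain ⟨hxG, hxb⟩ := mem_filter.1 hx
    exact hb (hinj (Prod.ext hxb (hxγ.trans hab.symm)) ▸ hxG)

theorem two_mul_sq_card_sdiff_le [DecidableEq X] {ρ : X → I} {γ : X → J}
    (hinj : Function.Injective fun x => (ρ x, γ x)) {G H : Finset X} (hG : CornerClosed ρ γ G)
    (hcard : #G = #H) :
    2 * #(G \ H) ^ 2 ≤ (fiberDiscrepancy ρ G H + fiberDiscrepancy γ G H) ^ 2 * #G := by
  obtain ⟨D₁, hD₁G, g₁, hg₁, hmap₁, hD₁⟩ := exists_fiberwise_injOn (G \ H) (H \ G) γ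
    (s := (G ∪ H).image γ) fun x hx =>
      mem_image_of_mem γ (sdiff_subset.trans subset_union_left hx)
  obtain ⟨D₂, -, g₂, hg₂, hmap₂, hD₂⟩ := exists_fiberwise_injOn (H \ G) (G \ H) ρ
    (s := (H ∪ G).image ρ) fun x hx =>
      mem_image_of_mem ρ (sdiff_subset.trans subset_union_left hx)
  have hq := card_sdiff_filter_mem_le (G \ H) (D₂ := D₂) hg₁ fun a ha => (hmap₁ a ha).1
  rw [hD₁, hD₂, ← Nat.mul_le_mul_left_iff two_pos, mul_add,
    ← fiberDiscrepancy_eq_two_mul_sum ρ hcard.symm, ← fiberDiscrepancy_eq_two_mul_sum γ hcard,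
    ← fiberDiscrepancy_comm ρ, add_comm] at hq
  set D := {a ∈ D₁ | g₁ a ∈ D₂}
  set q := #((G \ H) \ D)
  set r : X → ℕ := fun a => #{x ∈ G | ρ x = ρ a}
  have hdesc : ∀ a ∈ D, g₂ (g₁ a) ∈ G \ H ∧ r (g₂ (g₁ a)) < r a := by
    intro a ha
    obtain ⟨haD₁, hbD₂⟩ := mem_filter.1 ha
    obtain ⟨hb, hbγ⟩ := hmap₁ a haD₁
    obtain ⟨ha', ha'ρ⟩ := hmap₂ _ hbD₂
    refine ⟨ha', ?_⟩
    simp only [r, ha'ρ]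
    exact card_filter_lt_of_cornerClosed hinj hG (mem_sdiff.1 (hD₁G haD₁)).1 (mem_sdiff.1 hb).2
      hbγ
  have hlevel := card_filter_eq_le_card_sdiff (G \ H)
    (hg₂.comp (hg₁.mono (coe_subset.2 (filter_subset _ _))) fun a ha => (mem_filter.1 ha).2) hdesc
  have hfiber : ∀ i, #{a ∈ G \ H | ρ a = i} ≤ q := fun i =>
    (Finset.card_le_card fun a ha => by
      simp only [mem_filter, r] at ha ⊢
      exact ⟨ha.1, by rw [ha.2]⟩).trans (hlevel #{x ∈ G | ρ x = i})
  have hpos : ∀ a ∈ G \ H, 0 < r a := fun a ha =>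
    card_pos.2 ⟨a, mem_filter.2 ⟨(mem_sdiff.1 ha).1, rfl⟩⟩
  calc 2 * #(G \ H) ^ 2 ≤ 2 * (2 * ∑ a ∈ G \ H, #{b ∈ G \ H | r b ≤ r a}) := by
        gcongr; exact sq_card_le_two_mul_sum_card_filter_le (G \ H) r
    _ ≤ 2 * (2 * ∑ a ∈ G \ H, q * r a) := by
        gcongr with a; exact card_filter_le_le_mul (G \ H) hlevel hpos _
    _ ≤ (2 * q) ^ 2 * #G := by
        rw [← mul_sum]
        have := sum_card_filter_eq_le_mul (G \ H) G ρ hfiber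
        nlinarith
    _ ≤ _ := by gcongr

end Corners

lemma Submodule.span_singleton_inf_eq_bot {K V : Type*} [DivisionRing K] [AddCommGroup V]
    [Module K V] {u v : V} (h : K ∙ u ≠ K ∙ v) : (K ∙ u) ⊓ (K ∙ v) = ⊥ := by
  rcases eq_or_ne v 0 with rfl | hv
  · simp
  rw [← disjoint_iff, Submodule.disjoint_span_singleton' hv]
  intro hvu
  obtain ⟨a, rfl⟩ := Submodule.mem_span_singleton.1 hvu
  exact h (Submodule.span_singleton_smul_eq (IsUnit.mk0 a (left_ne_zero_of_smul hv)) u).symm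

lemma IsLatticeLine.inf_eq_bot {S₁ S₂ : Submodule ℝ (Fin d → ℝ)} (h₁ : IsLatticeLine S₁)
    (h₂ : IsLatticeLine S₂) (hne : S₁ ≠ S₂) : S₁ ⊓ S₂ = ⊥ := by
  obtain ⟨v₁, -, rfl⟩ := h₁
  obtain ⟨v₂, -, rfl⟩ := h₂
  exact Submodule.span_singleton_inf_eq_bot hne

def latticeProj (S : Submodule ℝ (Fin d → ℝ)) : (Fin d → ℤ) →+ (Fin d → ℝ) ⧸ S :=
  S.mkQ.toAddMonoidHom.comp (AddMonoidHom.compLeft (Int.castAddHom ℝ) (Fin d))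

lemma latticeProj_apply (S : Submodule ℝ (Fin d → ℝ)) (x : Fin d → ℤ) :
    latticeProj S x = Submodule.Quotient.mk (embed x) := rfl

lemma embed_injective : Function.Injective (embed : (Fin d → ℤ) → (Fin d → ℝ)) :=
  fun _ _ h => funext fun i => Int.cast_injective (congrFun h i)

lemma injective_latticeProj_prod {S₁ S₂ : Submodule ℝ (Fin d → ℝ)} (h : S₁ ⊓ S₂ = ⊥) :
    Function.Injective fun x => (latticeProj S₁ x, latticeProj S₂ x) := by
  intro x y hxy
  simp only [Prod.mk.injEq, latticeProj_apply, Submodule.Quotient.eq] at hxy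
  have hmem : embed x - embed y ∈ S₁ ⊓ S₂ := ⟨hxy.1, hxy.2⟩
  rw [h, Submodule.mem_bot, sub_eq_zero] at hmem
  exact embed_injective hmem

lemma ncard_embed_image_inter_fiber (S : Submodule ℝ (Fin d → ℝ))
    [DecidableEq ((Fin d → ℝ) ⧸ S)] (F : Finset (Fin d → ℤ)) (T : (Fin d → ℝ) ⧸ S) :
    (embed '' ↑F ∩ fiber S T).ncard = #{x ∈ F | latticeProj S x = T} := by
  rw [← ncard_coe_finset, coe_filter, ← ncard_image_of_injective _ embed_injective]
  congr 1
  ext u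
  simp only [Set.mem_inter_iff, Set.mem_image, mem_coe, fiber, Set.mem_ofPred_eq,
    latticeProj_apply]
  grind

lemma xrayEq_embed_image_iff (S : Submodule ℝ (Fin d → ℝ)) [DecidableEq ((Fin d → ℝ) ⧸ S)]
    (F F' : Finset (Fin d → ℤ)) :
    XrayEq S (embed '' ↑F') (embed '' ↑F) ↔
      ∀ T, #{x ∈ F' | latticeProj S x = T} = #{x ∈ F | latticeProj S x = T} := by
  simp only [XrayEq, ncard_embed_image_inter_fiber]

lemma finsum_xray_natAbs_sub_eq_fiberDiscrepancy (S : Submodule ℝ (Fin d → ℝ))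
    [DecidableEq ((Fin d → ℝ) ⧸ S)] (F₁ F₂ : Finset (Fin d → ℤ)) :
    ∑ᶠ T : (Fin d → ℝ) ⧸ S,
        (((embed '' ↑F₁ ∩ fiber S T).ncard : ℤ) - (embed '' ↑F₂ ∩ fiber S T).ncard).natAbs =
      fiberDiscrepancy (latticeProj S) F₁ F₂ := by
  simp only [ncard_embed_image_inter_fiber]
  refine finsum_eq_sum_of_support_subset _ fun T hT => ?_
  by_contra hT'
  simp only [coe_image, Set.mem_image, mem_coe, not_exists, not_and] at hT'
  have hempty : ∀ F ⊆ F₁ ∪ F₂, #{x ∈ F | latticeProj S x = T} = 0 := fun F hF =>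
    card_eq_zero.2 (filter_eq_empty_iff.2 fun x hx => hT' x (hF hx))
  exact hT (by simp [hempty F₁ subset_union_left, hempty F₂ subset_union_right])

lemma xrayDiff_pair_eq {S₁ S₂ : Submodule ℝ (Fin d → ℝ)} [DecidableEq ((Fin d → ℝ) ⧸ S₁)]
    [DecidableEq ((Fin d → ℝ) ⧸ S₂)] (hne : S₁ ≠ S₂) (F₁ F₂ : Finset (Fin d → ℤ)) :
    xrayDiff {S₁, S₂} (embed '' ↑F₁) (embed '' ↑F₂) =
      fiberDiscrepancy (latticeProj S₁) F₁ F₂ + fiberDiscrepancy (latticeProj S₂) F₁ F₂ := by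
  rw [xrayDiff, finsum_mem_pair hne, finsum_xray_natAbs_sub_eq_fiberDiscrepancy,
    finsum_xray_natAbs_sub_eq_fiberDiscrepancy]

lemma four_mul_le_of_two_mul_sq_le {k m n β : ℕ} (hn : k + m = n)
    (h : 2 * k ^ 2 ≤ β ^ 2 * n) :
    4 * (m : ℝ) + ((β : ℝ) + 2) * ((β : ℝ) - 1 + √(8 * (m : ℝ) + ((β : ℝ) - 1) ^ 2)) ≥
      4 * (n : ℝ) := by
  have hlin : 2 * (k : ℝ) ^ 2 ≤ ((β : ℝ) + 2) ^ 2 * m + ((β : ℝ) + 2) * ((β : ℝ) - 1) * k := by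
    have hdefect : (2 - (β : ℝ)) * k ≤ (4 * β + 4) * m := by
      rcases β with _ | _ | β
      · have : k = 0 := by nlinarith
        simp [this]
      · have : k ≤ m := by nlinarith
        push_cast
        linarith [(Nat.cast_le (α := ℝ)).2 this]
      · push_cast; nlinarith [(Nat.cast_nonneg (α := ℝ) k), (Nat.cast_nonneg (α := ℝ) m)]
    have hR : 2 * (k : ℝ) ^ 2 ≤ (β : ℝ) ^ 2 * (k + m) := by exact_mod_cast hn ▸ h
    nlinarith
  set s := √(8 * (m : ℝ) + ((β : ℝ) - 1) ^ 2)
  have hs : s ^ 2 = 8 * (m : ℝ) + ((β : ℝ) - 1) ^ 2 := Real.sq_sqrt (by positivity)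
  have hβs : 0 ≤ ((β : ℝ) + 2) * s := by positivity
  have hk : 4 * (k : ℝ) - ((β : ℝ) + 2) * ((β : ℝ) - 1) ≤ ((β : ℝ) + 2) * s :=
    abs_le_of_sq_le_sq' (by nlinarith) hβs |>.2
  rw [← hn]
  push_cast
  linarith

theorem van_dalen_stability
    (S₁ S₂ : Submodule ℝ (Fin 2 → ℝ)) (h₁ : IsLatticeLine S₁) (h₂ : IsLatticeLine S₂)
    (hne : S₁ ≠ S₂)
    (F₁ F₂ : Finset (Fin 2 → ℤ)) (hcard : F₁.card = F₂.card)
    (huniq : ∀ F' : Finset (Fin 2 → ℤ),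
      XrayEq S₁ (embed '' ↑F') (embed '' ↑F₁) →
      XrayEq S₂ (embed '' ↑F') (embed '' ↑F₁) → F' = F₁)
    (β : ℕ) (hβ : β = xrayDiff {S₁, S₂} (embed '' ↑F₁) (embed '' ↑F₂)) :
    4 * ((F₁ ∩ F₂).card : ℝ) +
      ((β : ℝ) + 2) * ((β : ℝ) - 1 +
        Real.sqrt (8 * ((F₁ ∩ F₂).card : ℝ) + ((β : ℝ) - 1) ^ 2)) ≥
      4 * (F₁.card : ℝ) := by
  classical
  have hinj := injective_latticeProj_prod (h₁.inf_eq_bot h₂ hne)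
  have hdet : IsDeterminedByFibers (latticeProj S₁) (latticeProj S₂) F₁ := fun F' hF'₁ hF'₂ =>
    huniq F' ((xrayEq_embed_image_iff S₁ F₁ F').2 hF'₁) ((xrayEq_embed_image_iff S₂ F₁ F').2 hF'₂)
  have hsq := two_mul_sq_card_sdiff_le hinj (hdet.cornerClosed hinj) hcard
  rw [← xrayDiff_pair_eq hne, ← hβ] at hsq
  exact four_mul_le_of_two_mul_sq_le (card_sdiff_add_card_inter F₁ F₂) hsq
end

section
/- (Bastien) Let k, n ∈ ℕ with n ≤ k, and let X and Y be multisets of integers, each of cardinality n, such that Σ_{x ∈ X} x^j = Σ_{y ∈ Y} y^j for all j = 1, …, k. Then X = Y as multisets. In particular, there exist no (k, n)-solutions of the Prouhet–Tarry–Escott problem with n < k + 1. -/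
/-!
Newton's identities express `i • e_i` through `e_0, …, e_{i-1}` and the power sums `p_1, …, p_i`,
so in a torsion-free ring the power sums `p_1, …, p_k` of a multiset determine `e_1, …, e_k`.
For a multiset of size `n ≤ k` these are all its elementary symmetric functions, hence they
determine the polynomial `∏ (X - x)`, whose roots are the multiset itself.
-/

open Polynomial Finset

namespace Multiset

variable {R : Type*} [CommRing R]

-- Plain `antidiagonal` would resolve to `Multiset.antidiagonal` in this namespace.
theorem mul_esymm_eq_sum (s : Multiset R) (k : ℕ) :
    k * s.esymm k = (-1) ^ (k + 1) * ∑ a ∈ HasAntidiagonal.antidiagonal k with a.1 < k,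
      (-1) ^ a.1 * s.esymm a.1 * (s.map (· ^ a.2)).sum := by
  classical
  have aeval_esymm (m : ℕ) :
      MvPolynomial.aeval (fun x : s => (x : R)) (MvPolynomial.esymm s R m) = s.esymm m := by
    rw [MvPolynomial.aeval_esymm_eq_multiset_esymm, map_univ_coe]
  have aeval_psum (m : ℕ) :
      MvPolynomial.aeval (fun x : s => (x : R)) (MvPolynomial.psum s R m) = (s.map (· ^ m)).sum := by
    simp only [MvPolynomial.psum, map_sum, map_pow, MvPolynomial.aeval_X]
    rw [Finset.sum_eq_multiset_sum, map_univ (f := (· ^ m))]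
  simpa only [map_mul, map_pow, map_neg, map_one, map_natCast, map_sum, aeval_esymm, aeval_psum] using
    congrArg (MvPolynomial.aeval (fun x : s => (x : R))) (MvPolynomial.mul_esymm_eq_sum s R k)

theorem esymm_eq_of_sum_map_pow_eq [IsAddTorsionFree R] {s t : Multiset R} {k : ℕ}
    (h : ∀ j, 1 ≤ j → j ≤ k → (s.map (· ^ j)).sum = (t.map (· ^ j)).sum) :
    ∀ i ≤ k, s.esymm i = t.esymm i := by
  intro i
  induction i using Nat.strong_induction_on with
  | _ i ih =>
    intro hik
    rcases i.eq_zero_or_pos with rfl | hi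
    · simp [esymm]
    apply IsAddTorsionFree.nsmul_right_injective hi.ne'
    simp only [nsmul_eq_mul]
    rw [s.mul_esymm_eq_sum, t.mul_esymm_eq_sum]
    refine congrArg _ (sum_congr rfl fun a ha => ?_)
    rw [Finset.mem_filter, HasAntidiagonal.mem_antidiagonal] at ha
    rw [ih a.1 ha.2 (by omega), h a.2 (by omega) (by omega)]

theorem eq_of_card_eq_of_esymm_eq [IsDomain R] {s t : Multiset R} (hcard : card s = card t)
    (h : ∀ i ≤ card s, s.esymm i = t.esymm i) : s = t := by
  have hprod : (s.map fun a => X - C a).prod = (t.map fun a => X - C a).prod := by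
    ext m
    rcases le_or_gt m (card s) with hm | hm
    · rw [prod_X_sub_C_coeff s hm, prod_X_sub_C_coeff t (hcard ▸ hm), h _ (by omega), hcard]
    · rw [coeff_eq_zero_of_natDegree_lt, coeff_eq_zero_of_natDegree_lt] <;>
        simpa [natDegree_multiset_prod_X_sub_C_eq_card, ← hcard]
  rw [← roots_multiset_prod_X_sub_C s, hprod, roots_multiset_prod_X_sub_C]

end Multiset

theorem bastien
    (k n : ℕ) (hn : n ≤ k)
    (X Y : Multiset ℤ) (hX : Multiset.card X = n) (hY : Multiset.card Y = n)
    (h : ∀ j : ℕ, 1 ≤ j → j ≤ k → (X.map (· ^ j)).sum = (Y.map (· ^ j)).sum) :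
    X = Y :=
  Multiset.eq_of_card_eq_of_esymm_eq (hX.trans hY.symm) fun i hi =>
    Multiset.esymm_eq_of_sum_map_pow_eq h i (by omega)
end
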